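/- arXiv:1802.03688 — 5 statements merged into one kernel-verified Lean document; each statement's English description precedes it below -/
import Mathlib

section
/- For the hinge loss φ(z) = max{0, 1−z}, the optimal generic conditional φ-risk is C*(η) = inf_{z∈ℝ} [η·φ(z) + (1−η)·φ(−z)] = min{2η, 2(1−η)} for all η ∈ [0,1]. -/
theorem stmt1 :
    ∀ η ∈ Set.Icc (0:ℝ) 1,
      (⨅ z : ℝ, η * max 0 (1 - z) + (1 - η) * max 0 (1 - (-z))) =
        min (2 * η) (2 * (1 - η)) := by
  rintro η ⟨h0, h1⟩
  have key : ∀ z : ℝ, min (2 * η) (2 * (1 - η)) ≤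
      η * max 0 (1 - z) + (1 - η) * max 0 (1 - (-z)) := by
    intro z
    rcases le_total (2 * η) (2 * (1 - η)) with h | h <;>
      [rw [min_eq_left h]; rw [min_eq_right h]] <;>
      rcases le_total (1 - z) 0 with hz | hz <;>
      rcases le_total (1 - -z) 0 with hz' | hz' <;>
      first
        | linarith
        | (rw [max_eq_left hz, max_eq_right hz']; nlinarith)
        | (rw [max_eq_right hz, max_eq_left hz']; nlinarith)
        | (rw [max_eq_right hz, max_eq_right hz']; nlinarith)
  have hbdd : BddBelow (Set.range fun z : ℝ =>
      η * max 0 (1 - z) + (1 - η) * max 0 (1 - (-z))) := by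
    refine ⟨min (2 * η) (2 * (1 - η)), ?_⟩
    rintro x ⟨z, rfl⟩
    exact key z
  apply le_antisymm
  · apply le_min
    · calc (⨅ z : ℝ, η * max 0 (1 - z) + (1 - η) * max 0 (1 - (-z)))
          ≤ η * max 0 (1 - (-1:ℝ)) + (1 - η) * max 0 (1 - (-(-1:ℝ))) :=
            ciInf_le hbdd (-1)
        _ = 2 * η := by norm_num; ring
    · calc (⨅ z : ℝ, η * max 0 (1 - z) + (1 - η) * max 0 (1 - (-z)))
          ≤ η * max 0 (1 - (1:ℝ)) + (1 - η) * max 0 (1 - (-(1:ℝ))) :=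
            ciInf_le hbdd 1
        _ = 2 * (1 - η) := by norm_num; ring
  · exact le_ciInf key
end

section
/- For the hinge loss, the ψ-transform ψ(θ) = φ(0) − C*((1+θ)/2) equals |θ| for all θ ∈ [−1,1]. -/
theorem stmt2 :
    ∀ θ ∈ Set.Icc (-1:ℝ) 1,
      max 0 (1 - (0:ℝ)) -
        (⨅ z : ℝ, ((1 + θ) / 2) * max 0 (1 - z) +
          (1 - (1 + θ) / 2) * max 0 (1 - (-z))) = |θ| := by
  intro θ hθ
  obtain ⟨h1, h2⟩ := hθ
  have hbdd : BddBelow (Set.range fun z : ℝ =>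
      ((1 + θ) / 2) * max 0 (1 - z) + (1 - (1 + θ) / 2) * max 0 (1 - (-z))) := by
    refine ⟨0, ?_⟩
    rintro x ⟨z, rfl⟩
    have := le_max_left 0 (1 - z)
    have := le_max_left 0 (1 - (-z))
    nlinarith
  have key : (⨅ z : ℝ, ((1 + θ) / 2) * max 0 (1 - z) +
      (1 - (1 + θ) / 2) * max 0 (1 - (-z))) = 1 - |θ| := by
    apply le_antisymm
    · rcases le_or_gt 0 θ with h | h
      · have := ciInf_le hbdd (1 : ℝ)
        rw [abs_of_nonneg h]
        refine this.trans_eq ?_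
        norm_num
        ring
      · have := ciInf_le hbdd (-1 : ℝ)
        rw [abs_of_neg h]
        refine this.trans_eq ?_
        norm_num
    · apply le_ciInf
      intro z
      have ha := le_max_left 0 (1 - z)
      have hb := le_max_right 0 (1 - z)
      have hc := le_max_left 0 (1 - (-z))
      have hd := le_max_right 0 (1 - (-z))
      rcases abs_cases θ with ⟨he, _⟩ | ⟨he, _⟩ <;> nlinarith
  rw [key]
  norm_num
end

section
/- For the logistic loss φ(z) = log₂(1+e^{−z}), the optimal generic conditional φ-risk is C*(η) = −η·log₂η − (1−η)·log₂(1−η) for η ∈ (0,1). -/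
/-! With `σ` the sigmoid, `1 + exp (-z) = (σ z)⁻¹` and `1 + exp z = (1 - σ z)⁻¹`, so the
conditional risk at `z` is the binary cross-entropy `-η logb 2 p - (1 - η) logb 2 (1 - p)` at
`p = σ z`. As `z` ranges over `ℝ`, `p` ranges over `(0, 1)`; by Gibbs' inequality the cross-entropy
is minimised at `p = η`, which is attained at `z = log (η / (1 - η))`. -/

open Real Set

theorem mul_log_sub_mul_log_le {a b : ℝ} (ha : 0 < a) (hb : 0 < b) :
    a * log b - a * log a ≤ b - a := by
  have h := log_le_sub_one_of_pos (div_pos hb ha)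
  rw [log_div hb.ne' ha.ne'] at h
  calc a * log b - a * log a = a * (log b - log a) := by ring
    _ ≤ a * (b / a - 1) := mul_le_mul_of_nonneg_left h ha.le
    _ = b - a := by field_simp

theorem binary_gibbs {η p : ℝ} (hη : η ∈ Ioo 0 1) (hp : p ∈ Ioo 0 1) :
    -η * log η - (1 - η) * log (1 - η) ≤ -η * log p - (1 - η) * log (1 - p) := by
  have h₁ := mul_log_sub_mul_log_le hη.1 hp.1
  have h₂ := mul_log_sub_mul_log_le (sub_pos.2 hη.2) (sub_pos.2 hp.2)
  linarith

theorem binary_gibbs_logb {b η p : ℝ} (hb : 1 < b) (hη : η ∈ Ioo 0 1) (hp : p ∈ Ioo 0 1) :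
    -η * logb b η - (1 - η) * logb b (1 - η) ≤ -η * logb b p - (1 - η) * logb b (1 - p) := by
  simp only [logb, mul_div_assoc', ← sub_div]
  exact div_le_div_of_nonneg_right (binary_gibbs hη hp) (log_pos hb).le

theorem logb_one_add_exp_neg (b z : ℝ) : logb b (1 + exp (-z)) = -logb b (sigmoid z) := by
  rw [sigmoid_def, logb_inv, neg_neg]

theorem logb_one_add_exp (b z : ℝ) : logb b (1 + exp z) = -logb b (1 - sigmoid z) := by
  rw [← sigmoid_neg, ← logb_one_add_exp_neg, neg_neg]

theorem logistic_risk_eq_cross_entropy (b η z : ℝ) :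
    η * logb b (1 + exp (-z)) + (1 - η) * logb b (1 + exp z) =
      -η * logb b (sigmoid z) - (1 - η) * logb b (1 - sigmoid z) := by
  rw [logb_one_add_exp_neg, logb_one_add_exp]
  ring

theorem sigmoid_log_div_one_sub {η : ℝ} (hη : η ∈ Ioo 0 1) : sigmoid (log (η / (1 - η))) = η := by
  have h₀ : η ≠ 0 := hη.1.ne'
  rw [sigmoid_def, exp_neg, exp_log (div_pos hη.1 (sub_pos.2 hη.2)), inv_div]
  field_simp
  ring

theorem stmt6 :
    ∀ η ∈ Set.Ioo (0:ℝ) 1,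
      (⨅ z : ℝ, η * Real.logb 2 (1 + Real.exp (-z)) +
        (1 - η) * Real.logb 2 (1 + Real.exp z)) =
      -η * Real.logb 2 η - (1 - η) * Real.logb 2 (1 - η) := by
  intro η hη
  simp only [logistic_risk_eq_cross_entropy]
  refine IsGLB.ciInf_eq (IsLeast.isGLB ⟨⟨log (η / (1 - η)), ?_⟩, ?_⟩)
  · simp only [sigmoid_log_div_one_sub hη]
  · rintro _ ⟨z, rfl⟩
    exact binary_gibbs_logb one_lt_two hη ⟨sigmoid_pos z, sigmoid_lt_one z⟩
end

section
/- For the modified hinge loss φ(z) = max{1−z, 0}^{1+Δ} with Δ > 0, the minimizer of z ↦ η·φ(z) + (1−η)·φ(−z) over z ∈ [−1,1] for η ∈ (0,1) is z*(η) = (η^{1/Δ} − (1−η)^{1/Δ})/(η^{1/Δ} + (1−η)^{1/Δ}). -/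
/-! On `[-1, 1]` the loss is `η (1 - z) ^ p + (1 - η) (1 + z) ^ p` with `p = 1 + Δ`, a convex
function of `z`. It is minimised where the two derivatives balance,
`η (1 - z) ^ Δ = (1 - η) (1 + z) ^ Δ`, and with `a = η ^ (1/Δ)`, `b = (1 - η) ^ (1/Δ)` this
happens at `1 - z = 2b / (a + b)`, `1 + z = 2a / (a + b)`. Minimality follows by adding the
tangent-line inequalities of `t ↦ t ^ p` at the two points: the linear terms cancel. -/

open Real Set

/-- Tangent-line inequality for the convex function `t ↦ t ^ p` on `[0, ∞)`. -/
lemma Real.rpow_add_mul_rpow_sub_one_mul_sub_le {p s t : ℝ} (hp : 1 ≤ p) (hs : 0 < s)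
    (ht : 0 ≤ t) : s ^ p + p * s ^ (p - 1) * (t - s) ≤ t ^ p := by
  have bernoulli := one_add_mul_self_le_rpow_one_add
    (show -1 ≤ t / s - 1 by linarith [div_nonneg ht hs.le]) hp
  rw [add_sub_cancel, div_rpow ht hs.le, le_div_iff₀ (rpow_pos_of_pos hs p)] at bernoulli
  calc s ^ p + p * s ^ (p - 1) * (t - s) = (1 + p * (t / s - 1)) * s ^ p := by
        rw [rpow_sub_one hs.ne']; field_simp
    _ ≤ t ^ p := bernoulli

lemma Real.mul_rpow_add_mul_rpow_le_of_balanced {p α β u₀ v₀ u v : ℝ} (hp : 1 ≤ p)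
    (hα : 0 ≤ α) (hβ : 0 ≤ β) (hu₀ : 0 < u₀) (hv₀ : 0 < v₀) (hu : 0 ≤ u) (hv : 0 ≤ v)
    (hbal : α * u₀ ^ (p - 1) = β * v₀ ^ (p - 1)) (hsum : u + v = u₀ + v₀) :
    α * u₀ ^ p + β * v₀ ^ p ≤ α * u ^ p + β * v ^ p := by
  have hu' := mul_le_mul_of_nonneg_left (rpow_add_mul_rpow_sub_one_mul_sub_le hp hu₀ hu) hα
  have hv' := mul_le_mul_of_nonneg_left (rpow_add_mul_rpow_sub_one_mul_sub_le hp hv₀ hv) hβ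
  linear_combination hu' + hv' - (p * (u - u₀)) * hbal - (p * β * v₀ ^ (p - 1)) * hsum

lemma isMinOn_mul_rpow_one_sub_add_mul_rpow_one_add {p α β z₀ : ℝ} (hp : 1 ≤ p)
    (hα : 0 ≤ α) (hβ : 0 ≤ β) (hz₀ : z₀ ∈ Ioo (-1) 1)
    (hbal : α * (1 - z₀) ^ (p - 1) = β * (1 + z₀) ^ (p - 1)) :
    IsMinOn (fun z => α * (1 - z) ^ p + β * (1 + z) ^ p) (Icc (-1) 1) z₀ := by
  intro z ⟨hz₁, hz₂⟩
  exact mul_rpow_add_mul_rpow_le_of_balanced hp hα hβ (by linarith [hz₀.2])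
    (by linarith [hz₀.1]) (by linarith) (by linarith) hbal (by ring)

lemma eqOn_max_one_sub_rpow_Icc {α β p : ℝ} :
    EqOn (fun z => α * max (1 - z) 0 ^ p + β * max (1 - -z) 0 ^ p)
      (fun z => α * (1 - z) ^ p + β * (1 + z) ^ p) (Icc (-1) 1) := by
  intro z ⟨hz₁, hz₂⟩
  simp only [sub_neg_eq_add, max_eq_left (show 0 ≤ 1 - z by linarith),
    max_eq_left (show 0 ≤ 1 + z by linarith)]

theorem stmt15 (Δ : ℝ) (hΔ : 0 < Δ) (η : ℝ) (hη : η ∈ Set.Ioo (0:ℝ) 1) :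
    IsMinOn
      (fun z : ℝ =>
        η * max (1 - z) 0 ^ (1 + Δ) + (1 - η) * max (1 - (-z)) 0 ^ (1 + Δ))
      (Set.Icc (-1) 1)
      ((η ^ (1 / Δ) - (1 - η) ^ (1 / Δ)) / (η ^ (1 / Δ) + (1 - η) ^ (1 / Δ))) := by
  obtain ⟨hη₀, hη₁⟩ := hη
  have haΔ : (η ^ (1 / Δ)) ^ Δ = η := by rw [one_div, rpow_inv_rpow hη₀.le hΔ.ne']
  have hbΔ : ((1 - η) ^ (1 / Δ)) ^ Δ = 1 - η := by
    rw [one_div, rpow_inv_rpow (by linarith) hΔ.ne']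
  set a := η ^ (1 / Δ)
  set b := (1 - η) ^ (1 / Δ)
  have ha : 0 < a := by positivity
  have hb : 0 < b := rpow_pos_of_pos (by linarith) _
  have hz₀ : (a - b) / (a + b) ∈ Ioo (-1) 1 := by
    have hab : 0 < a + b := by positivity
    exact ⟨by rw [lt_div_iff₀ hab]; linarith, by rw [div_lt_one hab]; linarith⟩
  -- both sides are `(2ab / (a + b)) ^ Δ`, since `η = a ^ Δ` and `1 - η = b ^ Δ`
  have hbal : η * (1 - (a - b) / (a + b)) ^ (1 + Δ - 1)
      = (1 - η) * (1 + (a - b) / (a + b)) ^ (1 + Δ - 1) := by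
    rw [add_sub_cancel_left, ← hbΔ, ← haΔ, ← mul_rpow ha.le, ← mul_rpow hb.le]
    · congr 1; field_simp; ring
    all_goals linarith [hz₀.1, hz₀.2]
  have hloss := eqOn_max_one_sub_rpow_Icc (α := η) (β := 1 - η) (p := 1 + Δ)
  exact (isMinOn_mul_rpow_one_sub_add_mul_rpow_one_add (by linarith) hη₀.le (by linarith)
    hz₀ hbal).congr (Filter.eventually_principal.2 hloss.symm)
    (hloss (Ioo_subset_Icc_self hz₀)).symm
end

section
/- For Δ > 0 let ψ_Δ(θ) = 1 − 2^Δ·(1−θ²)/((1+θ)^{1/Δ} + (1−θ)^{1/Δ})^Δ. Then lim_{θ→0+} ψ_Δ(θ)/(((1+Δ)/(2Δ))·θ²) = 1. -/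
/-!
Write `S θ = (1 + θ) ^ (1 / Δ) + (1 - θ) ^ (1 / Δ)`. As a symmetric second difference of
`y ↦ y ^ (1 / Δ)` at `1`, `(S θ - 2) / θ ^ 2 → (1 / Δ) (1 / Δ - 1)`, and the chain rule for
`y ↦ y ^ Δ` at `2` turns this into `(S θ ^ Δ - 2 ^ Δ) / θ ^ 2 → 2 ^ (Δ - 1) (1 / Δ - 1)`.
Since `ψ_Δ(θ) = (S θ ^ Δ - 2 ^ Δ + 2 ^ Δ θ ^ 2) / S θ ^ Δ`, the quotient `ψ_Δ(θ) / θ ^ 2`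
tends to `(1 / Δ - 1) / 2 + 1 = (1 + Δ) / (2 Δ)`.
-/

open Filter Topology

theorem HasDerivAt.tendsto_symmetric_slope_zero {f : ℝ → ℝ} {f' x : ℝ} (hf : HasDerivAt f f' x) :
    Tendsto (fun h => (f (x + h) - f (x - h)) / (2 * h)) (𝓝[≠] 0) (𝓝 f') := by
  have hneg : Tendsto (Neg.neg : ℝ → ℝ) (𝓝[≠] 0) (𝓝[≠] 0) := by
    rw [Tendsto, Filter.map_neg, neg_nhdsNE, neg_zero]
  have hright := hf.tendsto_slope_zero
  have hmean := ((hright.add (hright.comp hneg)).div_const 2)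
  rw [← two_mul, mul_div_cancel_left₀ _ two_ne_zero] at hmean
  refine hmean.congr fun h => ?_
  simp only [Function.comp_apply, smul_eq_mul, inv_neg, ← sub_eq_add_neg]
  ring

theorem tendsto_symmetric_second_difference {f f' : ℝ → ℝ} {f'' x : ℝ}
    (hf : ∀ᶠ y in 𝓝 x, HasDerivAt f (f' y) y) (hf' : HasDerivAt f' f'' x) :
    Tendsto (fun h => (f (x + h) + f (x - h) - 2 * f x) / h ^ 2) (𝓝[≠] 0) (𝓝 f'') := by
  have hp : Tendsto (fun h : ℝ => x + h) (𝓝 0) (𝓝 x) := by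
    simpa using tendsto_const_nhds.add (tendsto_id (x := 𝓝 (0 : ℝ)))
  have hm : Tendsto (fun h : ℝ => x - h) (𝓝 0) (𝓝 x) := by
    simpa using tendsto_const_nhds.sub (tendsto_id (x := 𝓝 (0 : ℝ)))
  refine HasDerivAt.lhopital_zero_nhdsNE (f' := fun h => f' (x + h) - f' (x - h))
    (g' := fun h => 2 * h) ?_ ?_ ?_ ?_ ?_ hf'.tendsto_symmetric_slope_zero
  · filter_upwards [eventually_nhdsWithin_of_eventually_nhds ((hp.eventually hf).and
      (hm.eventually hf))] with h ⟨hdp, hdm⟩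
    simpa [← sub_eq_add_neg] using
      ((hdp.comp_const_add x h).add (hdm.comp_const_sub x h)).sub_const (2 * f x)
  · exact .of_forall fun h => by simpa using hasDerivAt_pow 2 h
  · filter_upwards [self_mem_nhdsWithin] with h hh
    exact mul_ne_zero two_ne_zero hh
  · have hfx := hf.self_of_nhds.continuousAt.tendsto
    have := ((hfx.comp hp).add (hfx.comp hm)).sub_const (2 * f x)
    simpa [two_mul] using this.mono_left nhdsWithin_le_nhds
  · exact ((continuous_pow 2).tendsto' 0 0 (zero_pow two_ne_zero)).mono_left nhdsWithin_le_nhds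

theorem HasDerivAt.tendsto_comp_sub_div {𝕜 α : Type*} [NontriviallyNormedField 𝕜]
    {l : Filter α} {φ : 𝕜 → 𝕜} {φ' y₀ L : 𝕜} {u d : α → 𝕜} (hφ : HasDerivAt φ φ' y₀)
    (hu : Tendsto u l (𝓝 y₀))
    (hL : Tendsto (fun t => (u t - y₀) / d t) l (𝓝 L)) :
    Tendsto (fun t => (φ (u t) - φ y₀) / d t) l (𝓝 (φ' * L)) := by
  have hslope : Tendsto (fun t => dslope φ y₀ (u t)) l (𝓝 φ') := by
    have := (continuousAt_dslope_same.2 hφ.differentiableAt).tendsto.comp hu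
    rwa [dslope_same, hφ.deriv] at this
  refine (hslope.mul hL).congr fun t => ?_
  rw [← sub_smul_dslope φ y₀ (u t), smul_eq_mul]
  ring

theorem tendsto_rpow_symmetric_second_difference_one (a : ℝ) :
    Tendsto (fun h => ((1 + h) ^ a + (1 - h) ^ a - 2) / h ^ 2) (𝓝[≠] 0) (𝓝 (a * (a - 1))) := by
  have hderiv : ∀ᶠ y in 𝓝 (1 : ℝ), HasDerivAt (fun y => y ^ a) (a * y ^ (a - 1)) y := by
    filter_upwards [eventually_ne_nhds one_ne_zero] with y hy
    exact Real.hasDerivAt_rpow_const (Or.inl hy)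
  have hderiv2 :=
    (Real.hasDerivAt_rpow_const (x := 1) (p := a - 1) (Or.inl one_ne_zero)).const_mul a
  simpa using tendsto_symmetric_second_difference hderiv hderiv2

theorem stmt17 (Δ : ℝ) (hΔ : 0 < Δ) :
    Tendsto (fun θ : ℝ =>
        (1 - 2 ^ Δ * (1 - θ ^ 2) / ((1 + θ) ^ (1 / Δ) + (1 - θ) ^ (1 / Δ)) ^ Δ) /
        (((1 + Δ) / (2 * Δ)) * θ ^ 2))
      (𝓝[>] (0:ℝ)) (𝓝 1) := by
  set S : ℝ → ℝ := fun θ => (1 + θ) ^ (1 / Δ) + (1 - θ) ^ (1 / Δ)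
  have hS : Tendsto S (𝓝[>] 0) (𝓝 2) := by
    have : ContinuousAt S 0 := by fun_prop (disch := norm_num)
    simpa [S, one_add_one_eq_two] using this.tendsto.mono_left nhdsWithin_le_nhds
  have hsecond := (tendsto_rpow_symmetric_second_difference_one (1 / Δ)).mono_left
    (nhdsGT_le_nhdsNE 0)
  have hquot :=
    (Real.hasDerivAt_rpow_const (p := Δ) (Or.inl two_ne_zero)).tendsto_comp_sub_div hS hsecond
  have hlim := (hquot.add_const (2 ^ Δ)).div
    ((hS.rpow_const (p := Δ) (Or.inl two_ne_zero)).const_mul ((1 + Δ) / (2 * Δ))) (by positivity)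
  have hval :
      (Δ * 2 ^ (Δ - 1) * (1 / Δ * (1 / Δ - 1)) + 2 ^ Δ) / ((1 + Δ) / (2 * Δ) * 2 ^ Δ) = 1 := by
    rw [Real.rpow_sub two_pos, Real.rpow_one]
    field_simp
    ring
  rw [hval] at hlim
  refine hlim.congr' ?_
  filter_upwards [Ioo_mem_nhdsGT one_pos] with θ ⟨hθ0, hθ1⟩
  have hSpos : 0 < S θ := by
    have := Real.rpow_pos_of_pos (by linarith : (0:ℝ) < 1 + θ) (1 / Δ)
    have := Real.rpow_pos_of_pos (by linarith : (0:ℝ) < 1 - θ) (1 / Δ)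
    positivity
  have := Real.rpow_pos_of_pos hSpos Δ
  rw [Pi.div_apply]
  field_simp
  ring
end
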